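/- arXiv:1005.4074 — 4 statements merged into one kernel-verified Lean document; each statement's English description precedes it below -/
import Mathlib

section
/- Let D ∈ ℝ^{N×N} with ker D = span{1_N} (where 1_N is the all-ones vector), and let S ∈ ℝ^{(N-1)×N} be the difference matrix with S_{i,i} = -1, S_{i,i+1} = 1, and zeros elsewhere. Then there exists a unique matrix D̂ ∈ ℝ^{(N-1)×(N-1)} such that S D = D̂ S. -/
/-!
The partial-sum matrix `Σ` is a right inverse of the difference matrix `S`, and
`ker S = span {1} = ker D`. Hence `D̂ := S D Σ` works: `D Σ S = D` because `x - Σ S x ∈ ker S`.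
It is the only solution, since `S D = D̂ S` forces `D̂ = D̂ S Σ = S D Σ`.
-/

open Matrix

namespace Matrix

variable {m n R : Type*} [Fintype m] [Fintype n] [DecidableEq m] [CommRing R]

theorem existsUnique_mul_eq_mul_of_mul_eq_one {S : Matrix m n R} {T : Matrix n m R}
    {D : Matrix n n R} (hST : S * T = 1)
    (hker : LinearMap.ker S.mulVecLin ≤ LinearMap.ker D.mulVecLin) :
    ∃! Dhat : Matrix m m R, S * D = Dhat * S := by
  have hD : D * (T * S) = D := by
    refine ext_iff_mulVec.2 fun x => ?_
    have hx : x - T *ᵥ S *ᵥ x ∈ LinearMap.ker S.mulVecLin := by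
      rw [LinearMap.mem_ker, mulVecLin_apply, mulVec_sub, mulVec_mulVec, hST, one_mulVec,
        sub_self]
    have hDx := hker hx
    rw [LinearMap.mem_ker, mulVecLin_apply, mulVec_sub, sub_eq_zero] at hDx
    rw [hDx, mulVec_mulVec, mulVec_mulVec, Matrix.mul_assoc]
  refine ⟨S * D * T, ?_, fun A hA => ?_⟩
  · change S * D = S * D * T * S
    rw [Matrix.mul_assoc, Matrix.mul_assoc, hD]
  calc A = A * (S * T) := by rw [hST, Matrix.mul_one]
    _ = S * D * T := by rw [← Matrix.mul_assoc, hA]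

end Matrix

section DiffMatrix

variable (R : Type*) (N : ℕ)

def diffMatrix [Ring R] : Matrix (Fin (N - 1)) (Fin N) R :=
  of fun i j => if (j : ℕ) = i then -1 else if (j : ℕ) = i + 1 then 1 else 0

def partialSumMatrix [Ring R] : Matrix (Fin N) (Fin (N - 1)) R :=
  of fun j k => if (k : ℕ) < j then 1 else 0

variable {R N}

theorem diffMatrix_mulVec_apply [Ring R] (x : Fin N → R) (i : Fin (N - 1)) :
    (diffMatrix R N *ᵥ x) i = x ⟨i + 1, by omega⟩ - x ⟨i, by omega⟩ := by
  have hne : (⟨i, by omega⟩ : Fin N) ≠ ⟨i + 1, by omega⟩ := by simp [Fin.ext_iff]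
  rw [mulVec, dotProduct, Fintype.sum_eq_add _ _ hne]
  · simp [diffMatrix, neg_add_eq_sub]
  · rintro j ⟨hj, hj'⟩
    have h1 : (j : ℕ) ≠ i := fun h => hj (Fin.ext h)
    have h2 : (j : ℕ) ≠ i + 1 := fun h => hj' (Fin.ext h)
    simp [diffMatrix, h1, h2]

theorem diffMatrix_mul_partialSumMatrix [Ring R] :
    diffMatrix R N * partialSumMatrix R N = 1 := by
  ext i k
  have h := diffMatrix_mulVec_apply (fun j => partialSumMatrix R N j k) i
  rw [show (diffMatrix R N * partialSumMatrix R N) i k = _ from h]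
  simp only [partialSumMatrix, of_apply, one_apply, Fin.ext_iff]
  split_ifs <;> simp <;> omega

theorem ker_diffMatrix_le_span_one [CommRing R] :
    LinearMap.ker (diffMatrix R N).mulVecLin ≤ Submodule.span R {fun _ => 1} := by
  intro x hx
  replace hx : diffMatrix R N *ᵥ x = 0 := hx
  rcases Nat.eq_zero_or_pos N with rfl | hN
  · exact Subsingleton.elim x 0 ▸ Submodule.zero_mem _
  have hconst : ∀ k (hk : k < N), x ⟨k, hk⟩ = x ⟨0, hN⟩ := by
    intro k hk
    induction k with
    | zero => rfl
    | succ k ih =>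
      have hk' := congrFun hx ⟨k, by omega⟩
      rw [diffMatrix_mulVec_apply, Pi.zero_apply, sub_eq_zero] at hk'
      rw [hk', ih]
  refine Submodule.mem_span_singleton.2 ⟨x ⟨0, hN⟩, funext fun j => ?_⟩
  simp [← hconst j j.isLt]

end DiffMatrix

theorem stmt2_general {N : ℕ}
    (D : Matrix (Fin N) (Fin N) ℝ)
    (hker : LinearMap.ker D.mulVecLin = Submodule.span ℝ {(fun _ => 1 : Fin N → ℝ)})
    (S : Matrix (Fin (N - 1)) (Fin N) ℝ)
    (hS : ∀ i j, S i j = if (j : ℕ) = (i : ℕ) then -1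
      else if (j : ℕ) = (i : ℕ) + 1 then 1 else 0) :
    ∃! Dhat : Matrix (Fin (N - 1)) (Fin (N - 1)) ℝ, S * D = Dhat * S := by
  obtain rfl : S = diffMatrix ℝ N := ext hS
  exact existsUnique_mul_eq_mul_of_mul_eq_one diffMatrix_mul_partialSumMatrix
    (hker ▸ ker_diffMatrix_le_span_one)

theorem stmt2 {N : ℕ} (hN : 2 ≤ N)
    (D : Matrix (Fin N) (Fin N) ℝ)
    (hker : LinearMap.ker D.mulVecLin = Submodule.span ℝ {(fun _ => 1 : Fin N → ℝ)})
    (S : Matrix (Fin (N - 1)) (Fin N) ℝ)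
    (hS : ∀ i j, S i j = if (j : ℕ) = (i : ℕ) then -1
      else if (j : ℕ) = (i : ℕ) + 1 then 1 else 0) :
    ∃! Dhat : Matrix (Fin (N - 1)) (Fin (N - 1)) ℝ, S * D = Dhat * S :=
  stmt2_general D hker S hS
end

section
/- Let D ∈ ℝ^{N×N} with ker D = span{1_N} and let D̂ be defined by SD = D̂S. Then y^T D̂ y < 0 for all nonzero y ∈ ℝ^{N-1} if and only if D = Q Λ₀ for some matrix Q ∈ ℝ^{N×N} whose symmetric part is negative definite, where Λ₀ = S^T S. Moreover, in that case D̂ = S Q S^T. -/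
open Matrix

namespace Stmt4Aux

variable {N : ℕ}

def jlo (i : Fin (N - 1)) : Fin N := ⟨i.1, lt_of_lt_of_le i.2 (Nat.sub_le N 1)⟩

def jhi (i : Fin (N - 1)) : Fin N := ⟨i.1 + 1, by have := i.2; omega⟩

def ipred (i : Fin (N - 1)) : Fin (N - 1) :=
  ⟨i.1 - 1, Nat.lt_of_le_of_lt (Nat.sub_le _ _) i.2⟩

variable (S : Matrix (Fin (N - 1)) (Fin N) ℝ)
variable (hS : ∀ i j, S i j = if (j : ℕ) = (i : ℕ) then -1
      else if (j : ℕ) = (i : ℕ) + 1 then 1 else 0)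

include hS

theorem hS' : ∀ i j, S i j =
    (if j = jlo i then (-1 : ℝ) else 0) + (if j = jhi i then 1 else 0) := by
  intro i j
  rw [hS]
  have e1 : (j = jlo i) ↔ (j : ℕ) = (i : ℕ) := by
    rw [Fin.ext_iff]; exact Iff.rfl
  have e2 : (j = jhi i) ↔ (j : ℕ) = (i : ℕ) + 1 := by
    rw [Fin.ext_iff]; exact Iff.rfl
  simp only [e1, e2]
  by_cases h1 : (j : ℕ) = (i : ℕ) <;> by_cases h2 : (j : ℕ) = (i : ℕ) + 1 <;>
    simp [h1, h2] <;> omega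

theorem rowsum : ∀ i, ∑ j, S i j = 0 := by
  intro i
  have : ∑ j, S i j = ∑ j, ((if j = jlo i then (-1 : ℝ) else 0) + (if j = jhi i then 1 else 0)) :=
    Finset.sum_congr rfl fun j _ => hS' S hS i j
  rw [this, Finset.sum_add_distrib]
  simp [Finset.sum_ite_eq']

theorem mulvec (x : Fin N → ℝ) (i : Fin (N - 1)) :
    S.mulVec x i = x (jhi i) - x (jlo i) := by
  have : S.mulVec x i = ∑ j, ((if j = jlo i then (-1 : ℝ) else 0) + (if j = jhi i then 1 else 0)) * x j :=
    calc S.mulVec x i = ∑ j, S i j * x j := rfl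
      _ = _ := Finset.sum_congr rfl fun j _ => by rw [hS' S hS]
  rw [this]
  simp only [add_mul, ite_mul, neg_one_mul, zero_mul, one_mul, Finset.sum_add_distrib,
    Finset.sum_ite_eq', Finset.mem_univ, if_true]
  ring

theorem ker_S (hN : 2 ≤ N) (x : Fin N → ℝ) (hx : S.mulVec x = 0) :
    ∀ j : Fin N, x j = x ⟨0, by omega⟩ := by
  suffices h : ∀ n (hn : n < N), x ⟨n, hn⟩ = x ⟨0, by omega⟩ by
    intro j
    have := h j.1 j.2
    simpa using this
  intro n
  induction n with
  | zero => intro hn; rfl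
  | succ n ih =>
    intro hn
    have hn1 : n < N - 1 := by omega
    have hrow := congrFun hx ⟨n, hn1⟩
    rw [mulvec S hS] at hrow
    have e1 : jhi (⟨n, hn1⟩ : Fin (N - 1)) = ⟨n + 1, hn⟩ := rfl
    have e2 : jlo (⟨n, hn1⟩ : Fin (N - 1)) = ⟨n, by omega⟩ := rfl
    rw [e1, e2] at hrow
    have h2 : x ⟨n + 1, hn⟩ - x ⟨n, by omega⟩ = 0 := hrow
    have h3 := ih (by omega)
    linarith

theorem colsum_lo (y : Fin (N - 1) → ℝ) (i : Fin (N - 1)) :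
    Sᵀ.mulVec y (jlo i) = -y i + (if (i : ℕ) = 0 then 0 else y (ipred i)) := by
  have expand : Sᵀ.mulVec y (jlo i) =
      ∑ i', ((if jlo i = jlo i' then (-1 : ℝ) else 0) + (if jlo i = jhi i' then 1 else 0)) * y i' :=
    calc Sᵀ.mulVec y (jlo i) = ∑ i', S i' (jlo i) * y i' := rfl
      _ = _ := Finset.sum_congr rfl fun i' _ => by rw [hS' S hS]
  rw [expand]
  simp only [add_mul, ite_mul, neg_one_mul, zero_mul, one_mul, Finset.sum_add_distrib]
  congr 1
  · have hc : ∀ i', (jlo i = jlo i') ↔ i' = i := by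
      intro i'
      simp only [jlo, Fin.ext_iff]
      constructor <;> omega
    simp only [hc, Finset.sum_ite_eq', Finset.mem_univ, if_true]
  · by_cases h : (i : ℕ) = 0
    · rw [if_pos h]
      apply Finset.sum_eq_zero
      intro i' _
      rw [if_neg]
      intro e
      have : (i : ℕ) = (i' : ℕ) + 1 := congrArg Fin.val e
      omega
    · rw [if_neg h]
      have hc : ∀ i', (jlo i = jhi i') ↔ i' = ipred i := by
        intro i'
        simp only [jlo, jhi, ipred, Fin.ext_iff]
        constructor <;> omega
      simp only [hc, Finset.sum_ite_eq', Finset.mem_univ, if_true]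

theorem ker_ST (y : Fin (N - 1) → ℝ) (hy : Sᵀ.mulVec y = 0) : y = 0 := by
  suffices h : ∀ n, ∀ i : Fin (N - 1), (i : ℕ) = n → y i = 0 by
    funext i; exact h i.1 i rfl
  intro n
  induction n with
  | zero =>
    intro i hi
    have hc := congrFun hy (jlo i)
    rw [colsum_lo S hS, if_pos hi] at hc
    have : -y i + 0 = 0 := hc
    linarith
  | succ n ih =>
    intro i hi
    have hc := congrFun hy (jlo i)
    rw [colsum_lo S hS, if_neg (by omega)] at hc
    have h0 : y (ipred i) = 0 := ih (ipred i) (by simp [ipred]; omega)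
    have : -y i + y (ipred i) = 0 := hc
    rw [h0] at this
    linarith

theorem vecmul_one : Matrix.vecMul (fun _ => (1 : ℝ)) Sᵀ = 0 := by
  funext j
  show ∑ k, 1 * Sᵀ k j = 0
  simp only [one_mul, transpose_apply]
  exact rowsum S hS j

theorem ker_S_const (hN : 2 ≤ N) (x : Fin N → ℝ) (hx : S.mulVec x = 0) :
    ∃ e : ℝ, ∀ j, x j = e :=
  ⟨x ⟨0, by omega⟩, ker_S S hS hN x hx⟩

end Stmt4Aux
open Matrix Stmt4Aux in
theorem stmt4 {N : ℕ} (hN : 2 ≤ N)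
    (D : Matrix (Fin N) (Fin N) ℝ)
    (hker : LinearMap.ker D.mulVecLin = Submodule.span ℝ {(fun _ => 1 : Fin N → ℝ)})
    (S : Matrix (Fin (N - 1)) (Fin N) ℝ)
    (hS : ∀ i j, S i j = if (j : ℕ) = (i : ℕ) then -1
      else if (j : ℕ) = (i : ℕ) + 1 then 1 else 0)
    (Dhat : Matrix (Fin (N - 1)) (Fin (N - 1)) ℝ)
    (hDhat : S * D = Dhat * S) :
    ((∀ y : Fin (N - 1) → ℝ, y ≠ 0 → y ⬝ᵥ Dhat.mulVec y < 0) ↔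
      ∃ Q : Matrix (Fin N) (Fin N) ℝ,
        (∀ x : Fin N → ℝ, x ≠ 0 → x ⬝ᵥ Q.mulVec x < 0) ∧ D = Q * (Sᵀ * S)) ∧
    (∀ Q : Matrix (Fin N) (Fin N) ℝ,
      (∀ x : Fin N → ℝ, x ≠ 0 → x ⬝ᵥ Q.mulVec x < 0) → D = Q * (Sᵀ * S) →
        Dhat = S * Q * Sᵀ) := by
  have hD1 : D.mulVec (fun _ => (1 : ℝ)) = 0 := by
    have h1 : (fun _ => (1 : ℝ)) ∈ LinearMap.ker D.mulVecLin := by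
      rw [hker]; exact Submodule.mem_span_singleton_self _
    simpa using h1
  have hGdet : (S * Sᵀ).det ≠ 0 := by
    intro h
    obtain ⟨v, hv0, hv⟩ := Matrix.exists_mulVec_eq_zero_iff.mpr h
    have h2 : (Sᵀ.mulVec v) ⬝ᵥ (Sᵀ.mulVec v) = 0 := by
      calc (Sᵀ.mulVec v) ⬝ᵥ (Sᵀ.mulVec v) = (v ᵥ* S) ⬝ᵥ (Sᵀ.mulVec v) := by
            rw [mulVec_transpose]
        _ = v ⬝ᵥ (S.mulVec (Sᵀ.mulVec v)) := (dotProduct_mulVec _ _ _).symm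
        _ = v ⬝ᵥ ((S * Sᵀ).mulVec v) := by rw [mulVec_mulVec]
        _ = 0 := by rw [hv, dotProduct_zero]
    exact hv0 (ker_ST S hS v (dotProduct_self_eq_zero.mp h2))
  haveI : Invertible (S * Sᵀ) := Matrix.invertibleOfIsUnitDet _ (isUnit_iff_ne_zero.mpr hGdet)
  have hmo : ∀ Q : Matrix (Fin N) (Fin N) ℝ,
      D = Q * (Sᵀ * S) → Dhat = S * Q * Sᵀ := by
    intro Q hDQ
    have h1 : (Dhat * S) * Sᵀ = ((S * Q * Sᵀ) * (S * Sᵀ)) := by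
      rw [← hDhat, hDQ]
      simp only [Matrix.mul_assoc]
    calc Dhat = Dhat * ((S * Sᵀ) * ⅟(S * Sᵀ)) := by rw [mul_invOf_self, Matrix.mul_one]
      _ = ((Dhat * S) * Sᵀ) * ⅟(S * Sᵀ) := by simp only [Matrix.mul_assoc]
      _ = ((S * Q * Sᵀ) * (S * Sᵀ)) * ⅟(S * Sᵀ) := by rw [h1]
      _ = (S * Q * Sᵀ) * ((S * Sᵀ) * ⅟(S * Sᵀ)) := by rw [Matrix.mul_assoc]
      _ = S * Q * Sᵀ := by rw [mul_invOf_self, Matrix.mul_one]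
  refine ⟨⟨?_, ?_⟩, fun Q _ hDQ => hmo Q hDQ⟩
  · -- forward direction
    intro hneg
    set G : Matrix (Fin (N - 1)) (Fin (N - 1)) ℝ := S * Sᵀ with hGdef
    set Q₀ : Matrix (Fin N) (Fin N) ℝ := D * (Sᵀ * (⅟G * (⅟G * S))) with hQ₀def
    set a : Fin N → ℝ := Matrix.vecMul (fun _ => (1 : ℝ)) Q₀ with hadef
    set w : Fin N → ℝ := (-(1 : ℝ)/N) • a - (fun _ => 1) with hwdef
    set W : Matrix (Fin N) (Fin N) ℝ := Matrix.of (fun i _ => w i) with hWdef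
    have hQ₀Λ : Q₀ * (Sᵀ * S) = D := by
      rw [hQ₀def]
      simp only [Matrix.mul_assoc]
      rw [← Matrix.mul_assoc S Sᵀ S, ← hGdef, ← Matrix.mul_assoc (⅟G) G S,
        invOf_mul_self, Matrix.one_mul]
      have hvec : ∀ x, D.mulVec ((Sᵀ * (⅟G * S)).mulVec x) = D.mulVec x := by
        intro x
        have hSx : S.mulVec ((Sᵀ * (⅟G * S)).mulVec x) = S.mulVec x := by
          rw [mulVec_mulVec, ← Matrix.mul_assoc S Sᵀ, ← hGdef,
            ← Matrix.mul_assoc G (⅟G) S, mul_invOf_self, Matrix.one_mul]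
        have hker2 : S.mulVec (x - (Sᵀ * (⅟G * S)).mulVec x) = 0 := by
          rw [mulVec_sub, hSx, sub_self]
        obtain ⟨e, he⟩ := ker_S_const S hS hN _ hker2
        have hconst : x - (Sᵀ * (⅟G * S)).mulVec x = fun _ => e := funext he
        have hfun : (fun _ => e : Fin N → ℝ) = e • (fun _ => (1 : ℝ)) := by funext j; simp
        have h0 : D.mulVec (x - (Sᵀ * (⅟G * S)).mulVec x) = 0 := by
          rw [hconst, hfun, mulVec_smul, hD1, smul_zero]
        rw [mulVec_sub] at h0
        exact (sub_eq_zero.mp h0).symm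
      ext i j
      have h := hvec (Pi.single j 1)
      rw [mulVec_mulVec, mulVec_single_one, mulVec_single_one] at h
      exact congrFun h i
    have hWST : W * Sᵀ = 0 := by
      ext i k
      rw [Matrix.mul_apply]
      simp only [hWdef, Matrix.of_apply, transpose_apply, Matrix.zero_apply]
      rw [← Finset.mul_sum, rowsum S hS k, mul_zero]
    have hWΛ : W * (Sᵀ * S) = 0 := by
      rw [← Matrix.mul_assoc, hWST, Matrix.zero_mul]
    refine ⟨Q₀ + W, ?_, by rw [Matrix.add_mul, hQ₀Λ, hWΛ, add_zero]⟩
    intro x hx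
    set y : Fin (N - 1) → ℝ := (⅟G).mulVec (S.mulVec x) with hydef
    set c : ℝ := ∑ j, x j with hcdef
    set v : Fin N → ℝ := Sᵀ.mulVec ((⅟G).mulVec y) with hvdef
    have hSv : S.mulVec v = y := by
      rw [hvdef, mulVec_mulVec, mulVec_mulVec, ← hGdef, mul_invOf_self, one_mulVec]
    have hQ₀x : Q₀.mulVec x = D.mulVec v := by
      rw [hQ₀def, hvdef, hydef]
      simp only [← mulVec_mulVec]
    have hSx : S.mulVec (Sᵀ.mulVec y) = S.mulVec x := by
      rw [hydef, mulVec_mulVec, mulVec_mulVec, ← hGdef, mul_invOf_self, one_mulVec]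
    have hker1 : S.mulVec (x - Sᵀ.mulVec y) = 0 := by
      rw [mulVec_sub, hSx, sub_self]
    obtain ⟨d, hd⟩ := ker_S_const S hS hN _ hker1
    have hSTy : ∑ j, (Sᵀ.mulVec y) j = 0 := by
      calc ∑ j, (Sᵀ.mulVec y) j = (fun _ => (1 : ℝ)) ⬝ᵥ (Sᵀ.mulVec y) := by
            simp [dotProduct]
        _ = ((fun _ => (1 : ℝ)) ᵥ* Sᵀ) ⬝ᵥ y := dotProduct_mulVec _ _ _
        _ = 0 := by rw [vecmul_one S hS, zero_dotProduct]
    have hcd : c = N * d := by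
      have h1 : ∑ j, (x j - Sᵀ.mulVec y j) = ∑ _j : Fin N, d :=
        Finset.sum_congr rfl fun j _ => hd j
      rw [Finset.sum_sub_distrib, hSTy, sub_zero, ← hcdef] at h1
      rw [h1, Finset.sum_const, Finset.card_univ, Fintype.card_fin, nsmul_eq_mul]
    have hx_dec : x = Sᵀ.mulVec y + (fun _ => d) := by
      funext j
      have h1 : x j - Sᵀ.mulVec y j = d := hd j
      show x j = Sᵀ.mulVec y j + d
      linarith
    have key : x ⬝ᵥ (Q₀ + W).mulVec x = y ⬝ᵥ Dhat.mulVec y - c * c := by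
      have hWx : W.mulVec x = fun i => w i * c := by
        funext i
        show ∑ j, W i j * x j = w i * c
        simp only [hWdef, Matrix.of_apply]
        rw [← Finset.mul_sum, ← hcdef]
      have hxa : x ⬝ᵥ a = (fun _ => (1 : ℝ)) ⬝ᵥ (D.mulVec v) := by
        rw [hadef, dotProduct_comm, ← dotProduct_mulVec, hQ₀x]
      have hterm1 : x ⬝ᵥ Q₀.mulVec x
          = y ⬝ᵥ Dhat.mulVec y + d * ((fun _ => (1 : ℝ)) ⬝ᵥ (D.mulVec v)) := by
        rw [hQ₀x]
        nth_rewrite 1 [hx_dec]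
        rw [add_dotProduct]
        congr 1
        · calc (Sᵀ.mulVec y) ⬝ᵥ (D.mulVec v) = (y ᵥ* S) ⬝ᵥ (D.mulVec v) := by
                rw [mulVec_transpose]
            _ = y ⬝ᵥ (S.mulVec (D.mulVec v)) := (dotProduct_mulVec _ _ _).symm
            _ = y ⬝ᵥ ((S * D).mulVec v) := by rw [mulVec_mulVec]
            _ = y ⬝ᵥ ((Dhat * S).mulVec v) := by rw [hDhat]
            _ = y ⬝ᵥ (Dhat.mulVec (S.mulVec v)) := by rw [← mulVec_mulVec]
            _ = y ⬝ᵥ (Dhat.mulVec y) := by rw [hSv]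
        · show ∑ i, d * (D.mulVec v) i = _
          simp [dotProduct, Finset.mul_sum]
      have hterm2 : x ⬝ᵥ W.mulVec x = c * (x ⬝ᵥ w) := by
        rw [hWx]
        show ∑ i, x i * (w i * c) = c * ∑ i, x i * w i
        rw [Finset.mul_sum]
        exact Finset.sum_congr rfl fun i _ => by ring
      have hxone : x ⬝ᵥ (fun _ => (1 : ℝ)) = c := by
        simp [dotProduct, hcdef]
      have hxw : x ⬝ᵥ w = (-(1 : ℝ)/N) * (x ⬝ᵥ a) - c := by
        rw [hwdef, dotProduct_sub, dotProduct_smul, hxone, smul_eq_mul]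
      rw [add_mulVec, dotProduct_add, hterm1, hterm2, hxw, hxa]
      have hNne : (N : ℝ) ≠ 0 := Nat.cast_ne_zero.mpr (by omega)
      rw [hcd]
      field_simp
      ring
    rw [key]
    by_cases hy : y = 0
    · have hSx0 : S.mulVec x = 0 := by
        rw [← hSx, hy]; simp
      have hcne : c ≠ 0 := by
        intro hc0
        apply hx
        obtain ⟨e, he⟩ := ker_S_const S hS hN x hSx0
        have hsum : c = N * e := by
          rw [hcdef, Finset.sum_congr rfl fun j _ => he j, Finset.sum_const,
            Finset.card_univ, Fintype.card_fin, nsmul_eq_mul]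
        have hNe : (N : ℝ) * e = 0 := by rw [← hsum, hc0]
        have hNne : (N : ℝ) ≠ 0 := Nat.cast_ne_zero.mpr (by omega)
        have he0 : e = 0 := (mul_eq_zero.mp hNe).resolve_left hNne
        funext j
        rw [he j, he0]
        rfl
      have h1 : (0 : ℝ) < c * c := mul_self_pos.mpr hcne
      rw [hy]
      simp only [zero_dotProduct]
      linarith
    · have h1 := hneg y hy
      have h2 : 0 ≤ c * c := mul_self_nonneg c
      linarith
  · -- reverse direction
    rintro ⟨Q, hQ, hDQ⟩
    intro y hy
    rw [hmo Q hDQ]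
    have h1 : y ⬝ᵥ (S * Q * Sᵀ).mulVec y
        = (Sᵀ.mulVec y) ⬝ᵥ (Q.mulVec (Sᵀ.mulVec y)) := by
      rw [← mulVec_mulVec, ← mulVec_mulVec, dotProduct_mulVec, ← mulVec_transpose]
    rw [h1]
    exact hQ _ (fun h0 => hy (ker_ST S hS y h0))
end

section
/- Let D ∈ ℝ^{N×N} with ker D = span{1_N}, and suppose every ξ ∈ ker D^T satisfies ξ^T 1_N = 0 (i.e., no element of ker D^T has nonzero coordinate sum). Then rank(D²) ≤ N - 2. -/
open Matrix

theorem stmt6 {N : ℕ} (hN : 2 ≤ N)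
    (D : Matrix (Fin N) (Fin N) ℝ)
    (hker : LinearMap.ker D.mulVecLin = Submodule.span ℝ {(fun _ => 1 : Fin N → ℝ)})
    (hsum : ∀ ξ : Fin N → ℝ, Dᵀ.mulVec ξ = 0 → ∑ i, ξ i = 0) :
    (D * D).rank ≤ N - 2 := by
  have hNpos : 0 < N := by omega
  have hfinN : Module.finrank ℝ (Fin N → ℝ) = N := by simp
  -- the all-ones vector is nonzero and in ker D
  have h1ne : (fun _ => 1 : Fin N → ℝ) ≠ 0 := by
    intro h
    have := congrFun h ⟨0, hNpos⟩
    simp at this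
  have hD1 : D *ᵥ (fun _ => 1 : Fin N → ℝ) = 0 := by
    have : (fun _ => 1 : Fin N → ℝ) ∈ LinearMap.ker D.mulVecLin := by
      rw [hker]; exact Submodule.subset_span rfl
    simpa [Matrix.mulVecLin_apply] using this
  -- finrank of ker D = 1, so rank D = N - 1
  have hkerD : Module.finrank ℝ (LinearMap.ker D.mulVecLin) = 1 := by
    rw [hker]
    exact finrank_span_singleton h1ne
  have hrnD := D.mulVecLin.finrank_range_add_finrank_ker
  rw [hkerD, hfinN] at hrnD
  have hrankD : D.rank = N - 1 := by
    have : D.rank = Module.finrank ℝ (LinearMap.range D.mulVecLin) := rfl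
    omega
  -- the sum functional
  set f : (Fin N → ℝ) →ₗ[ℝ] ℝ := ∑ i, LinearMap.proj i with hf
  have hfapply : ∀ v : Fin N → ℝ, f v = ∑ i, v i := by
    intro v; simp [hf]
  have hfsurj : Function.Surjective f := by
    intro c
    refine ⟨Pi.single ⟨0, hNpos⟩ c, ?_⟩
    rw [hfapply]
    simp
  have hrangef : LinearMap.range f = ⊤ := LinearMap.range_eq_top.mpr hfsurj
  have hrnf := f.finrank_range_add_finrank_ker
  rw [hrangef, hfinN] at hrnf
  have hkerf : Module.finrank ℝ (LinearMap.ker f) = N - 1 := by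
    have : Module.finrank ℝ (⊤ : Submodule ℝ ℝ) = 1 := by simp
    omega
  -- range Dᵀ ≤ ker f
  have hle : LinearMap.range Dᵀ.mulVecLin ≤ LinearMap.ker f := by
    rintro x ⟨y, rfl⟩
    rw [LinearMap.mem_ker, hfapply]
    have : ∑ i, (Dᵀ.mulVecLin y) i = (D *ᵥ (fun _ => 1 : Fin N → ℝ)) ⬝ᵥ y := by
      simp only [Matrix.mulVecLin_apply, Matrix.mulVec, dotProduct,
        Matrix.transpose_apply]
      rw [Finset.sum_comm]
      simp [Finset.mul_sum, mul_comm]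
    rw [this, hD1]
    simp
  -- rank Dᵀ = N - 1 so range Dᵀ = ker f
  have hrankDT : Dᵀ.rank = N - 1 := by rw [Matrix.rank_transpose]; exact hrankD
  have hrangeDT : Module.finrank ℝ (LinearMap.range Dᵀ.mulVecLin) = N - 1 := hrankDT
  have hrange_eq : LinearMap.range Dᵀ.mulVecLin = LinearMap.ker f :=
    Submodule.eq_of_le_of_finrank_eq hle (by rw [hrangeDT, hkerf])
  -- ker Dᵀ has finrank 1, pick nonzero ξ
  have hrnDT := Dᵀ.mulVecLin.finrank_range_add_finrank_ker
  rw [hrangeDT, hfinN] at hrnDT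
  have hkerDT : Module.finrank ℝ (LinearMap.ker Dᵀ.mulVecLin) = 1 := by omega
  have hkerDTne : LinearMap.ker Dᵀ.mulVecLin ≠ ⊥ := by
    intro h
    rw [h] at hkerDT
    simp at hkerDT
  obtain ⟨ξ, hξmem, hξne⟩ := Submodule.exists_mem_ne_zero_of_ne_bot hkerDTne
  have hξker : Dᵀ *ᵥ ξ = 0 := (Matrix.mulVecLin_apply _ _).symm.trans (LinearMap.mem_ker.mp hξmem)
  -- ξ ∈ ker f = range Dᵀ, so ξ = Dᵀ η
  have hξf : ξ ∈ LinearMap.ker f := by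
    rw [LinearMap.mem_ker, hfapply]
    exact hsum ξ hξker
  rw [← hrange_eq] at hξf
  obtain ⟨η, hη⟩ := hξf
  have hη' : Dᵀ *ᵥ η = ξ := (Matrix.mulVecLin_apply _ _).symm.trans hη
  -- ξ, η ∈ ker ((Dᵀ * Dᵀ).mulVecLin) and are linearly independent
  have hξ2 : (Dᵀ * Dᵀ) *ᵥ ξ = 0 := by
    rw [← Matrix.mulVec_mulVec, hξker, Matrix.mulVec_zero]
  have hη2 : (Dᵀ * Dᵀ) *ᵥ η = 0 := by
    rw [← Matrix.mulVec_mulVec, hη', hξker]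
  have hli : LinearIndependent ℝ ![ξ, η] := by
    rw [LinearIndependent.pair_iff]
    intro s t hst
    have h1 : Dᵀ *ᵥ (s • ξ + t • η) = 0 := by rw [hst, Matrix.mulVec_zero]
    rw [Matrix.mulVec_add, Matrix.mulVec_smul, Matrix.mulVec_smul, hξker, hη',
      smul_zero, zero_add] at h1
    have ht : t = 0 := by
      by_contra ht
      exact hξne (by simpa [ht] using congrArg (fun v => t⁻¹ • v) h1)
    rw [ht, zero_smul, add_zero] at hst
    have hs : s = 0 := by
      by_contra hs
      exact hξne (by simpa [hs] using congrArg (fun v => s⁻¹ • v) hst)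
    exact ⟨hs, ht⟩
  -- span {ξ, η} ≤ ker ((Dᵀ*Dᵀ).mulVecLin), so its finrank is ≥ 2
  have hspan : Submodule.span ℝ (Set.range ![ξ, η]) ≤
      LinearMap.ker (Dᵀ * Dᵀ).mulVecLin := by
    rw [Submodule.span_le]
    rintro x ⟨i, rfl⟩
    fin_cases i
    · simp only [Matrix.cons_val_zero]
      exact LinearMap.mem_ker.mpr ((Matrix.mulVecLin_apply _ _).trans hξ2)
    · simp only [Matrix.cons_val_one, Matrix.head_cons]
      exact LinearMap.mem_ker.mpr ((Matrix.mulVecLin_apply _ _).trans hη2)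
  have hfr2 : Module.finrank ℝ (Submodule.span ℝ (Set.range ![ξ, η])) = 2 := by
    rw [finrank_span_eq_card hli]
    simp
  have hker2 : 2 ≤ Module.finrank ℝ (LinearMap.ker (Dᵀ * Dᵀ).mulVecLin) := by
    rw [← hfr2]
    exact Submodule.finrank_mono hspan
  -- conclude by rank-nullity for Dᵀ * Dᵀ and rank of transpose
  have hrnDD := (Dᵀ * Dᵀ).mulVecLin.finrank_range_add_finrank_ker
  rw [hfinN] at hrnDD
  have hDD : (D * D).rank = (Dᵀ * Dᵀ).rank := by
    rw [← Matrix.transpose_mul, Matrix.rank_transpose]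
  have : (Dᵀ * Dᵀ).rank = Module.finrank ℝ (LinearMap.range (Dᵀ * Dᵀ).mulVecLin) := rfl
  omega
end

section
/- Let B₀ ∈ ℝ^{m×m} be symmetric negative semidefinite with eigenvalues 0 = λ₁⁰ = … = λ_k⁰ > λ_{k+1}⁰ ≥ … ≥ λ_m⁰, where its kernel has dimension k, and let B₁(t) be a continuous symmetric 1-periodic matrix. Let {η₁,…,η_k} be an orthonormal basis of ker B₀ and define G(t) ∈ ℝ^{k×k} by G(t)_{ij} = η_i^T B₁(t) η_j. If ∫₀¹ λ_max(G(t)) dt < 0, then there exists g₀ > 0 such that for all g ≥ g₀, the largest eigenvalue λ₁(t) of gB₀ + B₁(t) satisfies ∫₀¹ λ₁(t) dt < 0. -/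
/-!
Write `x = Pᵀc + z` with `Pᵀc ∈ ker B₀` and `z ⊥ ker B₀`, where the rows of `P` are the `ηᵢ`.
On `ker B₀` the quadratic form of `g B₀ + B₁(t)` is that of `G(t)`, hence at most `λ_max(G(t))`;
on the orthogonal complement `B₀` is uniformly negative definite, so `g B₀` contributes at most
`-g μ |z|²`, which for large `g` absorbs both the cross term `2 (Pᵀc)ᵀ B₁(t) z` and `zᵀ B₁(t) z`.
This gives `λ₁(g, t) ≤ λ_max(G(t)) + ε` uniformly for `t ∈ [0, 1]`; since `λ₁(g, ·)` is continuous
(eigenvalues move by at most the size of the perturbation), integrating finishes the proof.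
-/

open Matrix Filter Topology

namespace Matrix

variable {m n : Type*} [Fintype m] [Fintype n]

def sumAbs (M : Matrix m n ℝ) : ℝ := ∑ i, ∑ j, |M i j|

theorem continuous_sumAbs : Continuous (sumAbs : Matrix m n ℝ → ℝ) :=
  continuous_finsetSum _ fun i _ => continuous_finsetSum _ fun j _ =>
    (continuous_id.matrix_elem i j).abs

theorem sumAbs_zero : sumAbs (0 : Matrix m n ℝ) = 0 := by simp [sumAbs]

theorem sumAbs_sub_comm (A B : Matrix m n ℝ) : sumAbs (A - B) = sumAbs (B - A) := by
  simp only [sumAbs, sub_apply, abs_sub_comm]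

theorem sq_le_dotProduct_self (u : n → ℝ) (i : n) : u i ^ 2 ≤ u ⬝ᵥ u := by
  simpa [dotProduct, sq] using
    Finset.single_le_sum (fun a _ => mul_self_nonneg (u a)) (Finset.mem_univ i)

theorem abs_dotProduct_mulVec_le (M : Matrix m n ℝ) (u : m → ℝ) (v : n → ℝ) :
    |u ⬝ᵥ M *ᵥ v| ≤ sumAbs M * ((u ⬝ᵥ u + v ⬝ᵥ v) / 2) := by
  have hexp : u ⬝ᵥ M *ᵥ v = ∑ i, ∑ j, u i * M i j * v j := by
    simp [dotProduct, mulVec, Finset.mul_sum, mul_assoc]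
  rw [hexp, sumAbs, Finset.sum_mul]
  refine (Finset.abs_sum_le_sum_abs _ _).trans (Finset.sum_le_sum fun i _ => ?_)
  rw [Finset.sum_mul]
  refine (Finset.abs_sum_le_sum_abs _ _).trans (Finset.sum_le_sum fun j _ => ?_)
  -- AM-GM on `|u i| |v j|`, then each square is at most the full squared norm
  have hamgm : |u i| * |v j| ≤ (u ⬝ᵥ u + v ⬝ᵥ v) / 2 := by
    nlinarith [sq_nonneg (|u i| - |v j|), sq_abs (u i), sq_abs (v j),
      sq_le_dotProduct_self u i, sq_le_dotProduct_self v j]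
  rw [abs_mul, abs_mul, mul_right_comm, mul_comm]
  exact mul_le_mul_of_nonneg_left hamgm (abs_nonneg _)

theorem abs_dotProduct_mulVec_self_le (M : Matrix n n ℝ) (x : n → ℝ) :
    |x ⬝ᵥ M *ᵥ x| ≤ sumAbs M * (x ⬝ᵥ x) := by
  simpa using abs_dotProduct_mulVec_le M x x

theorem two_mul_dotProduct_mulVec_le (M : Matrix m n ℝ) (u : m → ℝ) (v : n → ℝ) {τ : ℝ}
    (hτ : 0 < τ) : 2 * (u ⬝ᵥ M *ᵥ v) ≤ sumAbs M * (u ⬝ᵥ u / τ + τ * (v ⬝ᵥ v)) := by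
  have h := le_of_abs_le (abs_dotProduct_mulVec_le M u (τ • v))
  simp only [mulVec_smul, dotProduct_smul, smul_dotProduct, smul_eq_mul] at h
  have key : 2 * (u ⬝ᵥ M *ᵥ v) * τ ≤ sumAbs M * (u ⬝ᵥ u / τ + τ * (v ⬝ᵥ v)) * τ := by
    have : sumAbs M * (u ⬝ᵥ u / τ + τ * (v ⬝ᵥ v)) * τ
        = 2 * (sumAbs M * ((u ⬝ᵥ u + τ * (τ * (v ⬝ᵥ v))) / 2)) := by
      field_simp
    rw [this]; linarith
  exact le_of_mul_le_mul_right key hτ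

theorem dotProduct_mulVec_add_add {M : Matrix n n ℝ} (hM : M.IsHermitian) (y z : n → ℝ) :
    (y + z) ⬝ᵥ M *ᵥ (y + z) = y ⬝ᵥ M *ᵥ y + 2 * (y ⬝ᵥ M *ᵥ z) + z ⬝ᵥ M *ᵥ z := by
  have hsymm : z ⬝ᵥ M *ᵥ y = y ⬝ᵥ M *ᵥ z := by
    rw [dotProduct_mulVec, ← mulVec_transpose, (isHermitian_iff_isSymm.1 hM).eq, dotProduct_comm]
  simp only [mulVec_add, dotProduct_add, add_dotProduct, hsymm]
  ring

theorem dotProduct_mul_mul_transpose_mulVec {k : Type*} [Fintype k] (Q : Matrix m k ℝ)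
    (D : Matrix k k ℝ) (x : m → ℝ) :
    x ⬝ᵥ (Q * D * Qᵀ) *ᵥ x = (Qᵀ *ᵥ x) ⬝ᵥ D *ᵥ (Qᵀ *ᵥ x) := by
  rw [← mulVec_mulVec, ← mulVec_mulVec, dotProduct_mulVec, mulVec_transpose]

theorem exists_eq_transpose_mulVec_add [DecidableEq m] {P : Matrix m n ℝ} (hP : P * Pᵀ = 1)
    (x : n → ℝ) : ∃ c z, x = Pᵀ *ᵥ c + z ∧ P *ᵥ z = 0 :=
  ⟨P *ᵥ x, x - Pᵀ *ᵥ (P *ᵥ x), (add_sub_cancel _ x).symm, by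
    rw [mulVec_sub, mulVec_mulVec, hP, one_mulVec, sub_self]⟩

def realEigenvalues (M : Matrix n n ℝ) : Set ℝ := {r | ∃ x : n → ℝ, x ≠ 0 ∧ M *ᵥ x = r • x}

theorem le_of_mem_realEigenvalues {M : Matrix n n ℝ} {r c : ℝ} (hr : r ∈ realEigenvalues M)
    (hc : ∀ x, x ⬝ᵥ M *ᵥ x ≤ c * (x ⬝ᵥ x)) : r ≤ c := by
  obtain ⟨x, hx, hMx⟩ := hr
  have hpos : 0 < x ⬝ᵥ x := by
    simpa using (dotProduct_self_star_pos_iff (v := x)).2 hx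
  have := hc x
  rw [hMx, dotProduct_smul, smul_eq_mul] at this
  exact le_of_mul_le_mul_right this hpos

theorem abs_le_sumAbs_of_mem_realEigenvalues {M : Matrix n n ℝ} {r : ℝ}
    (hr : r ∈ realEigenvalues M) : |r| ≤ sumAbs M := by
  obtain ⟨x, hx, hMx⟩ := hr
  have hpos : 0 < x ⬝ᵥ x := by
    simpa using (dotProduct_self_star_pos_iff (v := x)).2 hx
  have := abs_dotProduct_mulVec_self_le M x
  rw [hMx, dotProduct_smul, smul_eq_mul, abs_mul, abs_of_pos hpos] at this
  exact le_of_mul_le_mul_right this hpos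

variable [DecidableEq n]

namespace IsHermitian

variable {M : Matrix n n ℝ}

theorem eigenvectorUnitary_mul_transpose (hM : M.IsHermitian) :
    (hM.eigenvectorUnitary : Matrix n n ℝ) * (hM.eigenvectorUnitary : Matrix n n ℝ)ᵀ = 1 := by
  simpa [star_eq_conjTranspose] using Unitary.coe_mul_star_self hM.eigenvectorUnitary

theorem dotProduct_mulVec_eq_sum_eigenvalues (hM : M.IsHermitian) (x : n → ℝ) :
    x ⬝ᵥ M *ᵥ x = ∑ i, hM.eigenvalues i * ((hM.eigenvectorUnitary : Matrix n n ℝ)ᵀ *ᵥ x) i ^ 2 := by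
  conv_lhs => rw [hM.spectral_theorem]
  rw [Unitary.conjStarAlgAut_apply, star_eq_conjTranspose, conjTranspose_eq_transpose_of_trivial,
    dotProduct_mul_mul_transpose_mulVec]
  simp [dotProduct, mulVec_diagonal, sq, mul_left_comm]

theorem dotProduct_self_eq_sum_sq (hM : M.IsHermitian) (x : n → ℝ) :
    x ⬝ᵥ x = ∑ i, ((hM.eigenvectorUnitary : Matrix n n ℝ)ᵀ *ᵥ x) i ^ 2 := by
  have := dotProduct_mul_mul_transpose_mulVec (hM.eigenvectorUnitary : Matrix n n ℝ) 1 x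
  rw [mul_one, eigenvectorUnitary_mul_transpose, one_mulVec, one_mulVec] at this
  rw [this]; simp [dotProduct, sq]

theorem eigenvalues_mem_realEigenvalues (hM : M.IsHermitian) (i : n) :
    hM.eigenvalues i ∈ realEigenvalues M :=
  ⟨_, (WithLp.ofLp_eq_zero 2).ne.2 <| hM.eigenvectorBasis.orthonormal.ne_zero i,
    hM.mulVec_eigenvectorBasis i⟩

theorem dotProduct_mulVec_le_of_isGreatest (hM : M.IsHermitian) {l : ℝ}
    (hl : IsGreatest (realEigenvalues M) l) (x : n → ℝ) : x ⬝ᵥ M *ᵥ x ≤ l * (x ⬝ᵥ x) := by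
  rw [hM.dotProduct_mulVec_eq_sum_eigenvalues, hM.dotProduct_self_eq_sum_sq, Finset.mul_sum]
  gcongr with i
  exact hl.2 (hM.eigenvalues_mem_realEigenvalues i)

theorem exists_pos_dotProduct_mulVec_le_neg (hM : M.IsHermitian) (hneg : ∀ x, x ⬝ᵥ M *ᵥ x ≤ 0) :
    ∃ μ > 0, ∀ z, (∀ w, M *ᵥ w = 0 → w ⬝ᵥ z = 0) → z ⬝ᵥ M *ᵥ z ≤ -μ * (z ⬝ᵥ z) := by
  have hnonpos (i : n) : hM.eigenvalues i ≤ 0 :=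
    le_of_mem_realEigenvalues (hM.eigenvalues_mem_realEigenvalues i) (by simpa using hneg)
  -- finitely many nonzero eigenvalues, all negative, stay below some `-μ < 0`
  have hev : ∀ᶠ μ in 𝓝[>] (0 : ℝ), ∀ i, hM.eigenvalues i ≠ 0 → hM.eigenvalues i ≤ -μ := by
    refine Filter.eventually_all.2 fun i => nhdsWithin_le_nhds ?_
    by_cases h : hM.eigenvalues i = 0
    · exact Eventually.of_forall fun _ h' => absurd h h'
    · filter_upwards [eventually_lt_nhds (neg_pos.2 ((hnonpos i).lt_of_ne h))] with μ hμ
      exact fun _ => by linarith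
  obtain ⟨μ, hμ, hμpos⟩ := (hev.and self_mem_nhdsWithin).exists
  refine ⟨μ, hμpos, fun z hz => ?_⟩
  rw [hM.dotProduct_mulVec_eq_sum_eigenvalues, hM.dotProduct_self_eq_sum_sq, Finset.mul_sum]
  refine Finset.sum_le_sum fun i _ => ?_
  by_cases h : hM.eigenvalues i = 0
  · have hi : ((hM.eigenvectorUnitary : Matrix n n ℝ)ᵀ *ᵥ z) i = 0 :=
      hz (hM.eigenvectorBasis i) (by rw [hM.mulVec_eigenvectorBasis, h, zero_smul])
    simp [hi]
  · exact mul_le_mul_of_nonneg_right (hμ i h) (sq_nonneg _)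

theorem exists_pos_dotProduct_mulVec_le_of_span_eq_ker (hM : M.IsHermitian)
    (hneg : ∀ x, x ⬝ᵥ M *ᵥ x ≤ 0) {P : Matrix m n ℝ}
    (hP : Submodule.span ℝ (Set.range P) = LinearMap.ker M.mulVecLin) :
    ∃ μ > 0, ∀ z, P *ᵥ z = 0 → z ⬝ᵥ M *ᵥ z ≤ -μ * (z ⬝ᵥ z) := by
  obtain ⟨μ, hμ, hgap⟩ := hM.exists_pos_dotProduct_mulVec_le_neg hneg
  refine ⟨μ, hμ, fun z hz => hgap z fun w hw => ?_⟩
  obtain ⟨d, rfl⟩ : w ∈ LinearMap.range P.vecMulLinear := by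
    rw [range_vecMulLinear]; exact hP ▸ hw
  rw [vecMulLinear_apply, ← dotProduct_mulVec, hz, dotProduct_zero]

end IsHermitian

theorem le_add_sumAbs_sub_of_isGreatest {A A' : Matrix n n ℝ} (hA' : A'.IsHermitian) {l l' : ℝ}
    (hl : l ∈ realEigenvalues A) (hl' : IsGreatest (realEigenvalues A') l') :
    l ≤ l' + sumAbs (A - A') :=
  le_of_mem_realEigenvalues hl fun x => by
    have h₁ := hA'.dotProduct_mulVec_le_of_isGreatest hl' x
    have h₂ := le_of_abs_le (abs_dotProduct_mulVec_self_le (A - A') x)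
    rw [sub_mulVec, dotProduct_sub] at h₂
    linarith

theorem abs_sub_le_sumAbs_sub_of_isGreatest {A A' : Matrix n n ℝ} (hA : A.IsHermitian)
    (hA' : A'.IsHermitian) {l l' : ℝ} (hl : IsGreatest (realEigenvalues A) l)
    (hl' : IsGreatest (realEigenvalues A') l') : |l - l'| ≤ sumAbs (A - A') := by
  have h₁ := le_add_sumAbs_sub_of_isGreatest hA' hl.1 hl'
  have h₂ := le_add_sumAbs_sub_of_isGreatest hA hl'.1 hl
  rw [sumAbs_sub_comm] at h₂
  exact abs_sub_le_iff.2 ⟨by linarith, by linarith⟩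

theorem continuous_of_isGreatest_realEigenvalues {X : Type*} [TopologicalSpace X]
    {A : X → Matrix n n ℝ} (hA : Continuous A) (hAh : ∀ t, (A t).IsHermitian) {l : X → ℝ}
    (hl : ∀ t, IsGreatest (realEigenvalues (A t)) (l t)) : Continuous l := by
  refine continuous_iff_continuousAt.2 fun s => tendsto_iff_dist_tendsto_zero.2 ?_
  have h₀ : Tendsto (fun t => sumAbs (A t - A s)) (𝓝 s) (𝓝 0) := by
    have hc : Continuous fun t => sumAbs (A t - A s) :=
      continuous_sumAbs.comp (hA.sub continuous_const)
    simpa [sumAbs_zero] using hc.tendsto s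
  refine squeeze_zero (fun _ => dist_nonneg) (fun t => ?_) h₀
  exact abs_sub_le_sumAbs_sub_of_isGreatest (hAh t) (hAh s) (hl t) (hl s)

theorem dotProduct_mulVec_smul_add_le [DecidableEq m] {P : Matrix m n ℝ} (hP : P * Pᵀ = 1)
    {B₀ B₁ : Matrix n n ℝ} (hB₀ : B₀.IsHermitian) (hB₀P : B₀ * Pᵀ = 0) {μ : ℝ}
    (hgap : ∀ z, P *ᵥ z = 0 → z ⬝ᵥ B₀ *ᵥ z ≤ -μ * (z ⬝ᵥ z)) (hB₁ : B₁.IsHermitian)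
    {Λ N ε g : ℝ} (hΛ : IsGreatest (realEigenvalues (P * B₁ * Pᵀ)) Λ) (hN : 0 < N)
    (hB₁N : sumAbs B₁ ≤ N) (hΛN : -N ≤ Λ) (hε : 0 < ε) (hg : 0 ≤ g)
    (hgμ : 2 * N + N ^ 2 / ε ≤ g * μ) (x : n → ℝ) :
    x ⬝ᵥ (g • B₀ + B₁) *ᵥ x ≤ (Λ + ε) * (x ⬝ᵥ x) := by
  obtain ⟨c, z, rfl, hPz⟩ := exists_eq_transpose_mulVec_add hP x
  have hyz : (Pᵀ *ᵥ c) ⬝ᵥ z = 0 := by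
    rw [mulVec_transpose, ← dotProduct_mulVec, hPz, dotProduct_zero]
  have hyy : (Pᵀ *ᵥ c) ⬝ᵥ (Pᵀ *ᵥ c) = c ⬝ᵥ c := by
    simpa [hP] using (dotProduct_mul_mul_transpose_mulVec P 1 c).symm
  have hB₀y : B₀ *ᵥ (Pᵀ *ᵥ c) = 0 := by rw [mulVec_mulVec, hB₀P, zero_mulVec]
  have hG : (P * B₁ * Pᵀ).IsHermitian :=
    conjTranspose_eq_transpose_of_trivial P ▸ isHermitian_mul_mul_conjTranspose P hB₁
  have hΛy : (Pᵀ *ᵥ c) ⬝ᵥ B₁ *ᵥ (Pᵀ *ᵥ c) ≤ Λ * ((Pᵀ *ᵥ c) ⬝ᵥ (Pᵀ *ᵥ c)) := by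
    rw [← dotProduct_mul_mul_transpose_mulVec, hyy]
    exact hG.dotProduct_mulVec_le_of_isGreatest hΛ c
  have hB₀x : (Pᵀ *ᵥ c + z) ⬝ᵥ B₀ *ᵥ (Pᵀ *ᵥ c + z) = z ⬝ᵥ B₀ *ᵥ z := by
    rw [add_comm, dotProduct_mulVec_add_add hB₀, hB₀y]
    simp
  have hxx : (Pᵀ *ᵥ c + z) ⬝ᵥ (Pᵀ *ᵥ c + z) = (Pᵀ *ᵥ c) ⬝ᵥ (Pᵀ *ᵥ c) + z ⬝ᵥ z := by
    rw [add_dotProduct, dotProduct_add, dotProduct_add, dotProduct_comm z, hyz]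
    ring
  have hz : 0 ≤ z ⬝ᵥ z := by simpa using dotProduct_star_self_nonneg z
  have hy : 0 ≤ (Pᵀ *ᵥ c) ⬝ᵥ (Pᵀ *ᵥ c) := by simpa using dotProduct_star_self_nonneg (Pᵀ *ᵥ c)
  have hcross := two_mul_dotProduct_mulVec_le B₁ (Pᵀ *ᵥ c) z (div_pos hN hε)
  have hzz := le_of_abs_le (abs_dotProduct_mulVec_self_le B₁ z)
  have hgap' := mul_le_mul_of_nonneg_left (hgap z hPz) hg
  rw [add_mulVec, smul_mulVec, dotProduct_add, dotProduct_smul, smul_eq_mul, hB₀x,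
    dotProduct_mulVec_add_add hB₁, hxx]
  have hcross' : sumAbs B₁ * ((Pᵀ *ᵥ c) ⬝ᵥ (Pᵀ *ᵥ c) / (N / ε) + N / ε * (z ⬝ᵥ z))
      ≤ ε * ((Pᵀ *ᵥ c) ⬝ᵥ (Pᵀ *ᵥ c)) + N ^ 2 / ε * (z ⬝ᵥ z) := by
    calc _ ≤ N * ((Pᵀ *ᵥ c) ⬝ᵥ (Pᵀ *ᵥ c) / (N / ε) + N / ε * (z ⬝ᵥ z)) := by gcongr
      _ = _ := by field_simp
  have hzz' : sumAbs B₁ * (z ⬝ᵥ z) ≤ N * (z ⬝ᵥ z) := by gcongr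
  have hZ : (-(g * μ) + N ^ 2 / ε + N) * (z ⬝ᵥ z) ≤ (Λ + ε) * (z ⬝ᵥ z) :=
    mul_le_mul_of_nonneg_right (by linarith) hz
  linarith

end Matrix

theorem intervalIntegral_neg_of_le_add {f h : ℝ → ℝ} {ε : ℝ} (hε : 0 ≤ ε)
    (hfε : (∫ t in (0 : ℝ)..1, f t) + ε < 0) (hh : Continuous h)
    (hle : ∀ t ∈ Set.Icc (0 : ℝ) 1, h t ≤ f t + ε) : ∫ t in (0 : ℝ)..1, h t < 0 := by
  -- a non-integrable `f` would have integral `0`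
  have hf : IntervalIntegrable f MeasureTheory.volume 0 1 := by
    by_contra hf
    rw [intervalIntegral.integral_undef hf] at hfε
    linarith
  calc ∫ t in (0 : ℝ)..1, h t ≤ ∫ t in (0 : ℝ)..1, (f t + ε) :=
        intervalIntegral.integral_mono_on zero_le_one (hh.intervalIntegrable 0 1)
          (hf.add intervalIntegrable_const) hle
    _ = (∫ t in (0 : ℝ)..1, f t) + ε := by
        simp [intervalIntegral.integral_add hf intervalIntegrable_const]
    _ < 0 := hfε

theorem stmt13_general {m k : ℕ}
    (B₀ : Matrix (Fin m) (Fin m) ℝ) (hB₀sym : B₀ᵀ = B₀)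
    (hB₀neg : ∀ x : Fin m → ℝ, x ⬝ᵥ B₀.mulVec x ≤ 0)
    (η : Fin k → (Fin m → ℝ))
    (hortho : ∀ i j, η i ⬝ᵥ η j = if i = j then (1:ℝ) else 0)
    (hker : ∀ i, B₀.mulVec (η i) = 0)
    (hspan : Submodule.span ℝ (Set.range η) = LinearMap.ker B₀.mulVecLin)
    (B₁ : ℝ → Matrix (Fin m) (Fin m) ℝ) (hB₁cont : Continuous B₁)
    (hB₁sym : ∀ t, (B₁ t)ᵀ = B₁ t)
    (lamG : ℝ → ℝ)
    (hlamG : ∀ t, IsGreatest {r : ℝ | ∃ y : Fin k → ℝ, y ≠ 0 ∧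
      (Matrix.of fun i j => η i ⬝ᵥ (B₁ t).mulVec (η j)).mulVec y = r • y} (lamG t))
    (hint : (∫ t in (0:ℝ)..1, lamG t) < 0)
    (lam1 : ℝ → ℝ → ℝ)
    (hlam1 : ∀ g t, IsGreatest {r : ℝ | ∃ x : Fin m → ℝ, x ≠ 0 ∧
      (g • B₀ + B₁ t).mulVec x = r • x} (lam1 g t)) :
    ∃ g₀ > (0:ℝ), ∀ g : ℝ, g₀ ≤ g → (∫ t in (0:ℝ)..1, lam1 g t) < 0 := by
  set P : Matrix (Fin k) (Fin m) ℝ := Matrix.of η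
  have hP : P * Pᵀ = 1 := by ext i j; rw [one_apply, ← hortho]; rfl
  have hB₀P : B₀ * Pᵀ = 0 := by ext a i; exact congrFun (hker i) a
  have hG (t : ℝ) : IsGreatest (realEigenvalues (P * B₁ t * Pᵀ)) (lamG t) := by
    rw [Matrix.mul_assoc]; exact hlamG t
  have hB₀ : B₀.IsHermitian := isHermitian_iff_isSymm.2 hB₀sym
  have hB₁ (t : ℝ) : (B₁ t).IsHermitian := isHermitian_iff_isSymm.2 (hB₁sym t)
  obtain ⟨μ, hμ, hgap⟩ := hB₀.exists_pos_dotProduct_mulVec_le_of_span_eq_ker hB₀neg hspan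
  have hsize : Continuous fun t => max (sumAbs (B₁ t)) (sumAbs (P * B₁ t * Pᵀ)) :=
    (continuous_sumAbs.comp hB₁cont).max (continuous_sumAbs.comp
      ((continuous_const.matrix_mul hB₁cont).matrix_mul continuous_const))
  obtain ⟨N, hNpos, hsizeN⟩ := (isCompact_Icc (a := (0 : ℝ)) (b := 1)).image_of_continuousOn
    hsize.continuousOn |>.isBounded.exists_pos_norm_le
  have hN (t) (ht : t ∈ Set.Icc (0 : ℝ) 1) :
      sumAbs (B₁ t) ≤ N ∧ sumAbs (P * B₁ t * Pᵀ) ≤ N :=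
    max_le_iff.1 ((le_abs_self _).trans (hsizeN _ (Set.mem_image_of_mem _ ht)))
  set ε := -(∫ t in (0:ℝ)..1, lamG t) / 2
  have hε : 0 < ε := by simp only [ε]; linarith
  refine ⟨(2 * N + N ^ 2 / ε) / μ, by positivity, fun g hg => ?_⟩
  have hg0 : 0 ≤ g := le_trans (by positivity) hg
  have hgμ : 2 * N + N ^ 2 / ε ≤ g * μ := (div_le_iff₀ hμ).1 hg
  have hA (t : ℝ) : (g • B₀ + B₁ t).IsHermitian :=
    isHermitian_iff_isSymm.2 ((IsSymm.smul hB₀sym g).add (hB₁sym t))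
  refine intervalIntegral_neg_of_le_add (f := lamG) hε.le (by simp only [ε]; linarith)
    (continuous_of_isGreatest_realEigenvalues (continuous_const.add hB₁cont) hA (hlam1 g))
    fun t ht => le_of_mem_realEigenvalues (hlam1 g t).1 ?_
  have hΛN : -N ≤ lamG t :=
    neg_le_of_abs_le ((abs_le_sumAbs_of_mem_realEigenvalues (hG t).1).trans (hN t ht).2)
  exact dotProduct_mulVec_smul_add_le hP hB₀ hB₀P hgap (hB₁ t) (hG t)
    hNpos (hN t ht).1 hΛN hε hg0 hgμ

theorem stmt13 {m k : ℕ}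
    (B₀ : Matrix (Fin m) (Fin m) ℝ) (hB₀sym : B₀ᵀ = B₀)
    (hB₀neg : ∀ x : Fin m → ℝ, x ⬝ᵥ B₀.mulVec x ≤ 0)
    (η : Fin k → (Fin m → ℝ))
    (hortho : ∀ i j, η i ⬝ᵥ η j = if i = j then (1:ℝ) else 0)
    (hker : ∀ i, B₀.mulVec (η i) = 0)
    (hspan : Submodule.span ℝ (Set.range η) = LinearMap.ker B₀.mulVecLin)
    (B₁ : ℝ → Matrix (Fin m) (Fin m) ℝ) (hB₁cont : Continuous B₁)
    (hB₁sym : ∀ t, (B₁ t)ᵀ = B₁ t) (hB₁per : ∀ t, B₁ (t + 1) = B₁ t)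
    (lamG : ℝ → ℝ)
    (hlamG : ∀ t, IsGreatest {r : ℝ | ∃ y : Fin k → ℝ, y ≠ 0 ∧
      (Matrix.of fun i j => η i ⬝ᵥ (B₁ t).mulVec (η j)).mulVec y = r • y} (lamG t))
    (hint : (∫ t in (0:ℝ)..1, lamG t) < 0)
    (lam1 : ℝ → ℝ → ℝ)
    (hlam1 : ∀ g t, IsGreatest {r : ℝ | ∃ x : Fin m → ℝ, x ≠ 0 ∧
      (g • B₀ + B₁ t).mulVec x = r • x} (lam1 g t)) :
    ∃ g₀ > (0:ℝ), ∀ g : ℝ, g₀ ≤ g → (∫ t in (0:ℝ)..1, lam1 g t) < 0 :=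
  stmt13_general B₀ hB₀sym hB₀neg η hortho hker hspan B₁ hB₁cont hB₁sym lamG hlamG hint lam1 hlam1
end
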